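/- arXiv:2504.03717 — 2 statements merged into one kernel-verified Lean document; each statement's English description precedes it below -/
import Mathlib

section
/- Let C > 0, let n be a positive integer, let c ≥ 2 be an integer, let d be a positive integer, and let λ > 0. Let γ be an n × c matrix of positive reals and let ε be an n × c random matrix such that for every (i,j) and every t > 0, P(|ε_{i,j}| > t) ≤ 2·exp(−C·t²·d / (λ²·γ_{i,j}²)). Let g : ℝ^{n×c} → ℝ be twice continuously differentiable with Hessian operator norm bounded everywhere by M ≥ 0. Then there exists a constant K > 0 depending only on C and n such that for every fixed H ∈ ℝ^{n×c}, with probability at least 0.99: |g(H + ε) − g(H)| ≤ K·λ·√(log c / d)·‖γ‖_F·‖∇g(H)‖_F + (M/2)·K²·λ²·(log c / d)·‖γ‖_F². -/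
open MeasureTheory Set

/-!
On the event that every entry satisfies `|ε i j| ≤ s γ i j` with `s = K λ √(log c / d)`, the
Frobenius norm of `ε` is at most `s ‖γ‖`, and the second-order Taylor bound
`|g (H + V) - g H| ≤ ‖∇g H‖ ‖V‖ + M/2 ‖V‖²` (the first-order remainder of `t ↦ g (H + t V)` is
fenced in by the parabola `M ‖V‖² t² / 2`) gives the claimed estimate. Taking
`K² = (200 n + 1) / C`, the tail bound makes each entry violate its threshold with probability
at most `2 c^{-(200 n + 1)}`, so the union bound over the `n c` entries leaves at most
`2 n c^{-200 n} ≤ 1/100`, as `200 n < 2^{200 n}`.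
-/

theorem abs_sub_sub_deriv_le_of_abs_deriv2_le {φ φ' φ'' : ℝ → ℝ} {B : ℝ}
    (hφ : ∀ t, HasDerivAt φ (φ' t) t) (hφ' : ∀ t, HasDerivAt φ' (φ'' t) t)
    (hB : ∀ t, |φ'' t| ≤ B) : |φ 1 - φ 0 - φ' 0| ≤ B / 2 := by
  have hslope : ∀ t ∈ Icc (0 : ℝ) 1, ‖φ' t - φ' 0‖ ≤ B * t := fun t ht => by
    simpa using norm_image_sub_le_of_norm_deriv_le_segment'
      (fun s _ => (hφ' s).hasDerivWithinAt) (fun s _ => hB s) t ht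
  have hf : ∀ t, HasDerivAt (fun t => φ t - φ 0 - t * φ' 0) (φ' t - φ' 0) t := fun t =>
    ((hφ t).sub_const (φ 0)).sub (hasDerivAt_mul_const (φ' 0))
  have hbound : ∀ t, HasDerivAt (fun t => B / 2 * t ^ 2) (B * t) t := fun t =>
    ((hasDerivAt_pow 2 t).const_mul (B / 2)).congr_deriv (by ring)
  have := image_norm_le_of_norm_deriv_right_le_deriv_boundary
    (fun t _ => (hf t).continuousAt.continuousWithinAt) (fun t _ => (hf t).hasDerivWithinAt)
    (by simp) hbound (fun t ht => hslope t (Ico_subset_Icc_self ht)) (right_mem_Icc.2 zero_le_one)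
  simpa using this

theorem abs_sub_sub_fderiv_le_of_hessian_le {E : Type*} [NormedAddCommGroup E] [NormedSpace ℝ E]
    {g : E → ℝ} (hg : ContDiff ℝ 2 g) {M : ℝ}
    (hHess : ∀ X V : E, |fderiv ℝ (fderiv ℝ g) X V V| ≤ M * ‖V‖ ^ 2) (H V : E) :
    |g (H + V) - g H - fderiv ℝ g H V| ≤ M / 2 * ‖V‖ ^ 2 := by
  have hg1 : Differentiable ℝ g := hg.differentiable (by norm_num)
  have hg2 : Differentiable ℝ (fderiv ℝ g) :=
    (hg.fderiv_right (m := 1) (by norm_num)).differentiable (by norm_num)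
  have hline : ∀ t : ℝ, HasDerivAt (fun s : ℝ => H + s • V) V t := fun t => by
    simpa using ((hasDerivAt_id t).smul_const V).const_add H
  have := abs_sub_sub_deriv_le_of_abs_deriv2_le (φ := fun t => g (H + t • V))
    (φ' := fun t => fderiv ℝ g (H + t • V) V)
    (φ'' := fun t => fderiv ℝ (fderiv ℝ g) (H + t • V) V V)
    (fun t => (hg1 _).hasFDerivAt.comp_hasDerivAt t (hline t))
    (fun t => by
      simpa using ((hg2 _).hasFDerivAt.comp_hasDerivAt t (hline t)).clm_apply
        (hasDerivAt_const t V))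
    (fun t => hHess _ V)
  simpa [mul_div_right_comm] using this

theorem abs_sub_le_of_hessian_le {F : Type*} [NormedAddCommGroup F] [InnerProductSpace ℝ F]
    [CompleteSpace F] {g : F → ℝ} (hg : ContDiff ℝ 2 g) {M : ℝ} (hM : 0 ≤ M)
    (hHess : ∀ X V : F, |fderiv ℝ (fderiv ℝ g) X V V| ≤ M * ‖V‖ ^ 2) (H : F) {V : F} {r : ℝ}
    (hV : ‖V‖ ≤ r) : |g (H + V) - g H| ≤ ‖gradient g H‖ * r + M / 2 * r ^ 2 := by
  have hlin : |fderiv ℝ g H V| ≤ ‖gradient g H‖ * ‖V‖ := by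
    rw [← toDual_gradient, InnerProductSpace.toDual_apply_apply]
    exact abs_real_inner_le_norm _ _
  calc |g (H + V) - g H|
      ≤ |fderiv ℝ g H V| + |g (H + V) - g H - fderiv ℝ g H V| := by
        simpa using abs_add_le (fderiv ℝ g H V) (g (H + V) - g H - fderiv ℝ g H V)
    _ ≤ ‖gradient g H‖ * ‖V‖ + M / 2 * ‖V‖ ^ 2 :=
        add_le_add hlin (abs_sub_sub_fderiv_le_of_hessian_le hg hHess H V)
    _ ≤ ‖gradient g H‖ * r + M / 2 * r ^ 2 := by gcongr

theorem EuclideanSpace.norm_le_mul_norm_of_abs_le {ι : Type*} [Fintype ι]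
    {x y : EuclideanSpace ℝ ι} {s : ℝ} (hs : 0 ≤ s) (h : ∀ i, |x i| ≤ s * |y i|) :
    ‖x‖ ≤ s * ‖y‖ := by
  rw [← Real.norm_of_nonneg hs, ← norm_smul]
  simp only [EuclideanSpace.norm_eq, Real.norm_eq_abs]
  refine Real.sqrt_le_sqrt (Finset.sum_le_sum fun i _ => pow_le_pow_left₀ (abs_nonneg _) ?_ 2)
  simpa [abs_mul, abs_of_nonneg hs] using h i

theorem measure_exists_lt_abs_le {ι Ω : Type*} [Fintype ι] [MeasurableSpace Ω] (μ : Measure Ω)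
    (X : Ω → EuclideanSpace ℝ ι) (t : ι → ℝ) {q : ℝ}
    (h : ∀ i, μ {ω | t i < |X ω i|} ≤ ENNReal.ofReal q) :
    μ {ω | ∃ i, t i < |X ω i|} ≤ ENNReal.ofReal (Fintype.card ι * q) := by
  calc μ {ω | ∃ i, t i < |X ω i|} ≤ ∑ i, μ {ω | t i < |X ω i|} := by
        rw [ofPred_exists]; exact measure_iUnion_fintype_le _ _
    _ ≤ ∑ _i : ι, ENNReal.ofReal q := Finset.sum_le_sum fun i _ => h i
    _ = ENNReal.ofReal (Fintype.card ι * q) := by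
        rw [ENNReal.ofReal_mul (by positivity), ENNReal.ofReal_natCast]
        simp

theorem ofReal_one_sub_le_measure_compl {Ω : Type*} [MeasurableSpace Ω] {μ : Measure Ω}
    [IsProbabilityMeasure μ] {s : Set Ω} {p : ℝ} (hp : 0 ≤ p) (hs : μ s ≤ ENNReal.ofReal p) :
    ENNReal.ofReal (1 - p) ≤ μ sᶜ := by
  rw [ENNReal.ofReal_sub _ hp, ENNReal.ofReal_one, tsub_le_iff_left]
  calc 1 = μ univ := measure_univ.symm
    _ ≤ μ s + μ sᶜ := measure_univ_le_add_compl s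
    _ ≤ ENNReal.ofReal p + μ sᶜ := by gcongr

theorem mul_two_mul_exp_neg_mul_log_le {n c : ℕ} (hc : 2 ≤ c) :
    (n * c : ℝ) * (2 * Real.exp (-((200 * n + 1 : ℕ) * Real.log c))) ≤ 1 / 100 := by
  have hc0 : (0 : ℝ) < c := by positivity
  have hpow : 200 * n * c ≤ c ^ (200 * n + 1) := by
    rw [pow_succ]
    gcongr
    exact Nat.lt_two_pow_self.le.trans (Nat.pow_le_pow_left hc _)
  have hpow' : (200 * n * c : ℝ) ≤ (c : ℝ) ^ (200 * n + 1) := by exact_mod_cast hpow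
  rw [Real.exp_neg, Real.exp_nat_mul, Real.exp_log hc0]
  rw [← div_eq_mul_inv, mul_div_assoc', div_le_iff₀ (by positivity)]
  linarith

theorem stmt5_general (C : ℝ) (hC : 0 < C) (n : ℕ) :
    ∃ K : ℝ, 0 < K ∧
      ∀ (c : ℕ), 2 ≤ c → ∀ (d : ℕ), 0 < d → ∀ (lam : ℝ), 0 < lam →
      ∀ (γ : EuclideanSpace ℝ (Fin n × Fin c)), (∀ i j, 0 < γ (i, j)) →
      ∀ (Ω : Type) [MeasurableSpace Ω] (μ : Measure Ω) [IsProbabilityMeasure μ]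
        (ε : Ω → EuclideanSpace ℝ (Fin n × Fin c)),
      (∀ i j, ∀ t : ℝ, 0 < t →
        μ {ω | t < |ε ω (i, j)|} ≤
          ENNReal.ofReal (2 * Real.exp (-(C * t ^ 2 * d) / (lam ^ 2 * (γ (i, j)) ^ 2)))) →
      ∀ (g : EuclideanSpace ℝ (Fin n × Fin c) → ℝ), ContDiff ℝ 2 g →
      ∀ (M : ℝ), 0 ≤ M →
      (∀ X E : EuclideanSpace ℝ (Fin n × Fin c),
        |fderiv ℝ (fderiv ℝ g) X E E| ≤ M * ‖E‖ ^ 2) →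
      ∀ (H : EuclideanSpace ℝ (Fin n × Fin c)),
      ENNReal.ofReal 0.99 ≤
        μ {ω | |g (H + ε ω) - g H| ≤
          K * lam * Real.sqrt (Real.log c / d) * ‖γ‖ * ‖gradient g H‖ +
          M / 2 * K ^ 2 * lam ^ 2 * (Real.log c / d) * ‖γ‖ ^ 2} := by
  refine ⟨√((200 * n + 1 : ℕ) / C), by positivity, ?_⟩
  intro c hc d hd lam hlam γ hγ Ω _ μ _ ε htail g hg M hM hHess H
  set K := √((200 * n + 1 : ℕ) / C)
  set L := Real.log c / d
  set s := K * lam * √L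
  have hL : 0 < L := div_pos (Real.log_pos (by exact_mod_cast hc)) (by exact_mod_cast hd)
  have hs : 0 < s := by positivity
  have hentry : ∀ p, μ {ω | s * γ p < |ε ω p|} ≤
      ENNReal.ofReal (2 * Real.exp (-((200 * n + 1 : ℕ) * Real.log c))) := by
    rintro ⟨i, j⟩
    refine (htail i j _ (mul_pos hs (hγ i j))).trans_eq ?_
    have hd0 : (d : ℝ) ≠ 0 := by positivity
    rw [mul_pow, mul_pow, mul_pow, Real.sq_sqrt hL.le, Real.sq_sqrt (by positivity)]
    field_simp [hlam.ne', (hγ i j).ne']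
    rw [mul_assoc, div_mul_cancel₀ _ hd0]
  have hbad : μ {ω | ∃ p, s * γ p < |ε ω p|} ≤ ENNReal.ofReal (1 / 100) := by
    refine (measure_exists_lt_abs_le μ ε _ hentry).trans (ENNReal.ofReal_le_ofReal ?_)
    simpa using mul_two_mul_exp_neg_mul_log_le (n := n) hc
  calc ENNReal.ofReal 0.99 = ENNReal.ofReal (1 - 1 / 100) := by norm_num
    _ ≤ μ {ω | ∃ p, s * γ p < |ε ω p|}ᶜ := ofReal_one_sub_le_measure_compl (by norm_num) hbad
    _ ≤ _ := measure_mono fun ω hω => ?_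
  simp only [mem_compl_iff, mem_ofPred_eq, not_exists, not_lt] at hω
  have hnorm : ‖ε ω‖ ≤ s * ‖γ‖ := EuclideanSpace.norm_le_mul_norm_of_abs_le hs.le
    fun ⟨i, j⟩ => by simpa [abs_of_pos (hγ i j)] using hω (i, j)
  refine (abs_sub_le_of_hessian_le hg hM hHess H hnorm).trans_eq ?_
  rw [mul_pow, mul_pow, mul_pow, Real.sq_sqrt hL.le]
  ring

/-- Main error-estimation theorem: there is a constant `K > 0` depending only on `C` and `n`
such that for any random matrix `ε ∈ ℝ^{n×c}` (viewed as a Euclidean space with the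
Frobenius inner product) with entrywise sub-Gaussian tails scaled by `λ γᵢⱼ / √d`, and any
`C²` function `g` with Hessian bounded by `M`, with probability at least `0.99`,
`|g(H+ε) - g(H)| ≤ K λ √(log c / d) ‖γ‖_F ‖∇g(H)‖_F + (M/2) K² λ² (log c / d) ‖γ‖_F²`. -/
theorem stmt5 (C : ℝ) (hC : 0 < C) (n : ℕ) (hn : 0 < n) :
    ∃ K : ℝ, 0 < K ∧
      ∀ (c : ℕ), 2 ≤ c → ∀ (d : ℕ), 0 < d → ∀ (lam : ℝ), 0 < lam →
      ∀ (γ : EuclideanSpace ℝ (Fin n × Fin c)), (∀ i j, 0 < γ (i, j)) →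
      ∀ (Ω : Type) [MeasurableSpace Ω] (μ : Measure Ω) [IsProbabilityMeasure μ]
        (ε : Ω → EuclideanSpace ℝ (Fin n × Fin c)),
      (∀ i j, ∀ t : ℝ, 0 < t →
        μ {ω | t < |ε ω (i, j)|} ≤
          ENNReal.ofReal (2 * Real.exp (-(C * t ^ 2 * d) / (lam ^ 2 * (γ (i, j)) ^ 2)))) →
      ∀ (g : EuclideanSpace ℝ (Fin n × Fin c) → ℝ), ContDiff ℝ 2 g →
      ∀ (M : ℝ), 0 ≤ M →
      (∀ X E : EuclideanSpace ℝ (Fin n × Fin c),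
        |fderiv ℝ (fderiv ℝ g) X E E| ≤ M * ‖E‖ ^ 2) →
      ∀ (H : EuclideanSpace ℝ (Fin n × Fin c)),
      ENNReal.ofReal 0.99 ≤
        μ {ω | |g (H + ε ω) - g H| ≤
          K * lam * Real.sqrt (Real.log c / d) * ‖γ‖ * ‖gradient g H‖ +
          M / 2 * K ^ 2 * lam ^ 2 * (Real.log c / d) * ‖γ‖ ^ 2} :=
  stmt5_general C hC n
end

section
/- Let C > 0, let n be a positive integer, let c ≥ 2 be an integer, let d be a positive integer, let b be a nonnegative integer, let X be an n × d real matrix with rows x₁,…,xₙ, and let W be a d × c real matrix with columns w₁,…,w_c, all rows of X and columns of W nonzero. Let ε be an n × c random matrix such that for every (i,j) and every t > 0, P(|ε_{i,j}| > t) ≤ 2·exp(−C·t²·d / (2^{−2b}·‖x_i‖²·‖w_j‖²)). Let g : ℝ^{n×c} → ℝ be twice continuously differentiable with Hessian operator norm bounded everywhere by M ≥ 0. Then there exists a constant K > 0 depending only on C and n such that for every fixed H ∈ ℝ^{n×c}, with probability at least 0.99: |g(H + ε) − g(H)| ≤ K·2^{−b}·√(log c / d)·‖∇g(H)‖_F·‖X‖_F·‖W‖_F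 + (M/2)·K²·2^{−2b}·(log c / d)·‖X‖_F²·‖W‖_F². -/
/-!
On the event that every entry satisfies `|ε_ij| ≤ K 2^{-b} √(log c / d) ‖x_i‖ ‖w_j‖`, summing
squares gives `‖ε‖_F ≤ K 2^{-b} √(log c / d) ‖X‖_F ‖W‖_F`, and the second-order Taylor bound
`|g(H + E) - g(H)| ≤ ‖∇g(H)‖ ‖E‖ + (M/2) ‖E‖²` turns this into the claim. Choosing
`C K² = 1 + log₂(200 n)` makes each entry fail with probability at most
`2 c^{-CK²} ≤ 1/(100 n c)`, so a union bound over the `n c` entries leaves probability `0.99`.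
-/

open MeasureTheory

/-- Euclidean (ℓ²) norm of a vector in `ℝ^d`. -/
noncomputable def euclNorm {d : ℕ} (v : Fin d → ℝ) : ℝ :=
  Real.sqrt (∑ k, v k ^ 2)

/-- Frobenius norm of a real matrix. -/
noncomputable def frobNorm {a b : ℕ} (A : Matrix (Fin a) (Fin b) ℝ) : ℝ :=
  Real.sqrt (∑ i, ∑ j, A i j ^ 2)

section Taylor

variable {F : Type*} [NormedAddCommGroup F] {g : F → ℝ} {M : ℝ}

lemma abs_fderiv_add_smul_sub_le [NormedSpace ℝ F] (hg : ContDiff ℝ 2 g)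
    (hHess : ∀ Y E : F, |fderiv ℝ (fderiv ℝ g) Y E E| ≤ M * ‖E‖ ^ 2) (H E : F) (t : ℝ) :
    |fderiv ℝ g (H + t • E) E - fderiv ℝ g H E| ≤ M * ‖E‖ ^ 2 * |t| := by
  have hdiff : Differentiable ℝ (fderiv ℝ g) :=
    (hg.fderiv_right (m := 1) le_rfl).differentiable one_ne_zero
  have hderiv : ∀ s : ℝ, HasDerivAt (fun s => fderiv ℝ g (H + s • E) E)
      (fderiv ℝ (fderiv ℝ g) (H + s • E) E E) s := fun s =>
    ((hdiff _).hasFDerivAt.comp_hasDerivAt s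
      (((hasDerivAt_id s).smul_const E).const_add H |>.congr_deriv (one_smul ℝ E))).clm_apply
      (hasDerivAt_const s E) |>.congr_deriv (by simp)
  simpa using convex_univ.norm_image_sub_le_of_norm_hasDerivWithin_le
    (fun s _ => (hderiv s).hasDerivWithinAt) (fun s _ => hHess (H + s • E) E)
    (Set.mem_univ 0) (Set.mem_univ t)

lemma abs_sub_sub_inner_gradient_le [InnerProductSpace ℝ F] [CompleteSpace F] (hg : ContDiff ℝ 2 g)
    (hHess : ∀ Y E : F, |fderiv ℝ (fderiv ℝ g) Y E E| ≤ M * ‖E‖ ^ 2) (H E : F) :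
    |g (H + E) - g H - inner ℝ (gradient g H) E| ≤ M / 2 * ‖E‖ ^ 2 := by
  have hdiff : Differentiable ℝ g := hg.differentiable two_ne_zero
  set L := fderiv ℝ g H E
  have hφ : ∀ s : ℝ, HasDerivAt (fun s => g (H + s • E) - g H - s * L)
      (fderiv ℝ g (H + s • E) E - L) s := fun s =>
    (((hdiff _).hasFDerivAt.comp_hasDerivAt s
      (((hasDerivAt_id s).smul_const E).const_add H |>.congr_deriv (one_smul ℝ E))).sub_const
      (g H)).sub ((hasDerivAt_id s).mul_const L |>.congr_deriv (one_mul L))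
  have hB (s : ℝ) : HasDerivAt (fun s => M / 2 * ‖E‖ ^ 2 * s ^ 2) (M * ‖E‖ ^ 2 * s) s := by
    refine ((hasDerivAt_pow 2 s).const_mul (M / 2 * ‖E‖ ^ 2)).congr_deriv ?_
    push_cast
    ring
  have key := image_norm_le_of_norm_deriv_right_le_deriv_boundary
    (fun s _ => (hφ s).continuousAt.continuousWithinAt) (fun s _ => (hφ s).hasDerivWithinAt)
    (by simp) hB (fun s hs => by
      simpa [abs_of_nonneg hs.1] using abs_fderiv_add_smul_sub_le hg hHess H E s)
    (Set.right_mem_Icc.2 zero_le_one)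
  simpa [L, gradient] using key

lemma abs_sub_le_of_norm_le [InnerProductSpace ℝ F] [CompleteSpace F] (hg : ContDiff ℝ 2 g)
    (hHess : ∀ Y E : F, |fderiv ℝ (fderiv ℝ g) Y E E| ≤ M * ‖E‖ ^ 2) (hM : 0 ≤ M)
    (H : F) {E : F} {r : ℝ} (hE : ‖E‖ ≤ r) :
    |g (H + E) - g H| ≤ ‖gradient g H‖ * r + M / 2 * r ^ 2 := calc
  |g (H + E) - g H|
      ≤ |inner ℝ (gradient g H) E| + |g (H + E) - g H - inner ℝ (gradient g H) E| := by
    simpa using abs_add_le (inner ℝ (gradient g H) E) (g (H + E) - g H - inner ℝ (gradient g H) E)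
  _ ≤ ‖gradient g H‖ * ‖E‖ + M / 2 * ‖E‖ ^ 2 :=
    add_le_add (abs_real_inner_le_norm _ _) (abs_sub_sub_inner_gradient_le hg hHess H E)
  _ ≤ ‖gradient g H‖ * r + M / 2 * r ^ 2 := by gcongr

end Taylor

open scoped Matrix

section UnionBound

variable {ι Ω : Type*} [Fintype ι] [MeasurableSpace Ω]

lemma one_sub_sum_tail_le_measure_norm_le (μ : Measure Ω) [IsProbabilityMeasure μ]
    (ε : Ω → EuclideanSpace ℝ ι) (t : ι → ℝ) :
    1 - ∑ p, μ {ω | t p < |ε ω p|} ≤ μ {ω | ‖ε ω‖ ≤ √(∑ p, t p ^ 2)} := by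
  set S := {ω | ‖ε ω‖ ≤ √(∑ p, t p ^ 2)}
  have hSc : Sᶜ ⊆ ⋃ p, {ω | t p < |ε ω p|} := by
    intro ω hω
    by_contra hbad
    simp only [Set.mem_iUnion, Set.mem_ofPred_eq, not_exists, not_lt] at hbad
    refine hω ?_
    rw [Set.mem_ofPred_eq, EuclideanSpace.norm_eq]
    gcongr with p
    exact hbad p
  calc 1 - ∑ p, μ {ω | t p < |ε ω p|} ≤ 1 - μ Sᶜ :=
        tsub_le_tsub_left ((measure_mono hSc).trans (measure_iUnion_fintype_le μ _)) 1
    _ ≤ μ S := by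
        rw [tsub_le_iff_right, ← measure_univ (μ := μ)]
        exact measure_univ_le_add_compl S

lemma ofReal_one_sub_card_mul_le_measure_norm_le (μ : Measure Ω) [IsProbabilityMeasure μ]
    (ε : Ω → EuclideanSpace ℝ ι) (t : ι → ℝ) {q : ℝ} (hq : 0 ≤ q)
    (htail : ∀ p, μ {ω | t p < |ε ω p|} ≤ ENNReal.ofReal q) :
    ENNReal.ofReal (1 - Fintype.card ι * q) ≤ μ {ω | ‖ε ω‖ ≤ √(∑ p, t p ^ 2)} := by
  have hsum : ∑ p, μ {ω | t p < |ε ω p|} ≤ ENNReal.ofReal (Fintype.card ι * q) := by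
    rw [ENNReal.ofReal_mul (Nat.cast_nonneg _), ENNReal.ofReal_natCast, ← nsmul_eq_mul]
    simpa using Finset.sum_le_sum fun p (_ : p ∈ Finset.univ) => htail p
  calc ENNReal.ofReal (1 - Fintype.card ι * q)
      = 1 - ENNReal.ofReal (Fintype.card ι * q) := by
        rw [ENNReal.ofReal_sub _ (by positivity), ENNReal.ofReal_one]
    _ ≤ 1 - ∑ p, μ {ω | t p < |ε ω p|} := tsub_le_tsub_left hsum 1
    _ ≤ _ := one_sub_sum_tail_le_measure_norm_le μ ε t

end UnionBound

lemma euclNorm_sq {d : ℕ} (v : Fin d → ℝ) : euclNorm v ^ 2 = ∑ k, v k ^ 2 :=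
  Real.sq_sqrt (Finset.sum_nonneg fun _ _ => sq_nonneg _)

lemma euclNorm_pos {d : ℕ} {v : Fin d → ℝ} (hv : v ≠ 0) : 0 < euclNorm v := by
  obtain ⟨k, hk⟩ := Function.ne_iff.1 hv
  exact Real.sqrt_pos.2 <| (pow_pos (abs_pos.2 hk) 2).trans_le <| (sq_abs (v k)).symm ▸
    Finset.single_le_sum (fun i _ => sq_nonneg (v i)) (Finset.mem_univ k)

lemma frobNorm_sq_eq_sum_euclNorm_sq {a b : ℕ} (A : Matrix (Fin a) (Fin b) ℝ) :
    frobNorm A ^ 2 = ∑ i, euclNorm (A i) ^ 2 := by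
  simp only [euclNorm_sq, frobNorm]
  exact Real.sq_sqrt (Finset.sum_nonneg fun i _ => Finset.sum_nonneg fun j _ => sq_nonneg _)

lemma frobNorm_transpose {a b : ℕ} (A : Matrix (Fin a) (Fin b) ℝ) : frobNorm Aᵀ = frobNorm A := by
  rw [frobNorm, frobNorm, Finset.sum_comm]
  rfl

lemma sqrt_sum_sq_mul_euclNorm_mul_euclNorm {n d c : ℕ} (X : Matrix (Fin n) (Fin d) ℝ)
    (W : Matrix (Fin d) (Fin c) ℝ) {κ : ℝ} (hκ : 0 ≤ κ) :
    √(∑ p : Fin n × Fin c, (κ * euclNorm (X p.1) * euclNorm (Wᵀ p.2)) ^ 2) =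
      κ * frobNorm X * frobNorm W := by
  have hsum : ∑ p : Fin n × Fin c, (κ * euclNorm (X p.1) * euclNorm (Wᵀ p.2)) ^ 2 =
      (κ * frobNorm X * frobNorm W) ^ 2 := by
    simp only [mul_pow, ← Finset.mul_sum, Fintype.sum_prod_type, ← Finset.sum_mul]
    rw [frobNorm_sq_eq_sum_euclNorm_sq, ← frobNorm_transpose W, frobNorm_sq_eq_sum_euclNorm_sq]
  rw [hsum, Real.sqrt_sq (by unfold frobNorm; positivity)]

lemma zpow_neg_two_mul_natCast {G : Type*} [DivisionMonoid G] (x : G) (b : ℕ) :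
    x ^ (-(2 * b : ℤ)) = (x ^ (-(b : ℤ))) ^ 2 := by
  rw [← zpow_natCast, ← zpow_mul]
  ring_nf

lemma exp_neg_div_eq_rpow_of_threshold {C K c d x w t : ℝ} {b : ℕ} (hc : 1 ≤ c) (hd : 0 < d)
    (hx : x ≠ 0) (hw : w ≠ 0) (ht : t = K * 2 ^ (-(b : ℤ)) * √(Real.log c / d) * x * w) :
    Real.exp (-(C * t ^ 2 * d) / ((2 : ℝ) ^ (-(2 * b : ℤ)) * x ^ 2 * w ^ 2)) =
      c ^ (-(C * K ^ 2)) := by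
  have hlog : 0 ≤ Real.log c := Real.log_nonneg hc
  rw [Real.rpow_def_of_pos (by linarith), zpow_neg_two_mul_natCast, ht]
  congr 1
  rw [mul_pow, mul_pow, mul_pow, mul_pow, Real.sq_sqrt (div_nonneg hlog hd.le)]
  field_simp

lemma mul_mul_rpow_neg_one_add_logb_le {c N : ℝ} (hc : 2 ≤ c) (hN : 1 ≤ N) :
    N * (c * c ^ (-(1 + Real.logb 2 N))) ≤ 1 := by
  have hc0 : 0 < c := by linarith
  have hq : 0 ≤ Real.logb 2 N := Real.logb_nonneg one_lt_two hN
  have hself : c * c ^ (-(1 + Real.logb 2 N)) = (c ^ Real.logb 2 N)⁻¹ := by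
    rw [neg_add, Real.rpow_add hc0, Real.rpow_neg_one, Real.rpow_neg hc0.le]
    field_simp
  calc N * (c * c ^ (-(1 + Real.logb 2 N))) ≤ N * ((2 : ℝ) ^ Real.logb 2 N)⁻¹ := by
        rw [hself]
        gcongr
    _ = 1 := by
        rw [Real.rpow_logb two_pos (by norm_num) (by linarith), mul_inv_cancel₀ (by positivity)]

lemma mul_mul_two_mul_rpow_neg_le {n c : ℝ} (hn : 1 ≤ n) (hc : 2 ≤ c) :
    n * c * (2 * c ^ (-(1 + Real.logb 2 (200 * n)))) ≤ 1 / 100 := by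
  have := mul_mul_rpow_neg_one_add_logb_le hc (show 1 ≤ 200 * n by linarith)
  linarith

noncomputable def tailConstant (C : ℝ) (n : ℕ) : ℝ := √((1 + Real.logb 2 (200 * n)) / C)

section tailConstant

variable {C : ℝ} {n : ℕ}

lemma one_add_logb_pos (hn : 0 < n) : 0 < 1 + Real.logb 2 (200 * n) := by
  have := Real.logb_nonneg one_lt_two (show 1 ≤ 200 * (n : ℝ) by norm_cast; omega)
  positivity

lemma tailConstant_pos (hC : 0 < C) (hn : 0 < n) : 0 < tailConstant C n :=
  Real.sqrt_pos.2 (div_pos (one_add_logb_pos hn) hC)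

lemma mul_tailConstant_sq (hC : 0 < C) (hn : 0 < n) :
    C * tailConstant C n ^ 2 = 1 + Real.logb 2 (200 * n) := by
  rw [tailConstant, Real.sq_sqrt (div_pos (one_add_logb_pos hn) hC).le]
  field_simp

end tailConstant

/-- Layer-wise quantization error corollary: under the sub-Gaussian tail assumption for
`b`-bit RaBitQ-H quantization error of a linear layer (input `X ∈ ℝ^{n×d}`, weights
`W ∈ ℝ^{d×c}`), there is a constant `K > 0` depending only on `C` and `n` such that for
any `C²` function `g` with Hessian bounded by `M` and any `H`, with probability at
least `0.99`,
`|g(H+ε) − g(H)| ≤ K 2^{−b} √(log c / d) ‖∇g(H)‖_F ‖X‖_F ‖W‖_F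
  + (M/2) K² 2^{−2b} (log c / d) ‖X‖_F² ‖W‖_F²`. -/
theorem stmt7 (C : ℝ) (hC : 0 < C) (n : ℕ) (hn : 0 < n) :
    ∃ K : ℝ, 0 < K ∧
      ∀ (c : ℕ), 2 ≤ c → ∀ (d : ℕ), 0 < d → ∀ (b : ℕ),
      ∀ (X : Matrix (Fin n) (Fin d) ℝ) (W : Matrix (Fin d) (Fin c) ℝ),
      (∀ i, X i ≠ 0) → (∀ j, (fun k => W k j) ≠ 0) →
      ∀ (Ω : Type) [MeasurableSpace Ω] (μ : Measure Ω) [IsProbabilityMeasure μ]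
        (ε : Ω → EuclideanSpace ℝ (Fin n × Fin c)),
      (∀ i j, ∀ t : ℝ, 0 < t →
        μ {ω | t < |ε ω (i, j)|} ≤
          ENNReal.ofReal (2 * Real.exp (-(C * t ^ 2 * d) /
            ((2 : ℝ) ^ (-(2 * b : ℤ)) * euclNorm (X i) ^ 2 * euclNorm (fun k => W k j) ^ 2)))) →
      ∀ (g : EuclideanSpace ℝ (Fin n × Fin c) → ℝ), ContDiff ℝ 2 g →
      ∀ (M : ℝ), 0 ≤ M →
      (∀ Y E : EuclideanSpace ℝ (Fin n × Fin c),
        |fderiv ℝ (fderiv ℝ g) Y E E| ≤ M * ‖E‖ ^ 2) →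
      ∀ (H : EuclideanSpace ℝ (Fin n × Fin c)),
      ENNReal.ofReal 0.99 ≤
        μ {ω | |g (H + ε ω) - g H| ≤
          K * (2 : ℝ) ^ (-(b : ℤ)) * Real.sqrt (Real.log c / d) * ‖gradient g H‖ *
            frobNorm X * frobNorm W +
          M / 2 * K ^ 2 * (2 : ℝ) ^ (-(2 * b : ℤ)) * (Real.log c / d) *
            frobNorm X ^ 2 * frobNorm W ^ 2} := by
  refine ⟨tailConstant C n, tailConstant_pos hC hn, ?_⟩
  intro c hc d hd b X W hX hW Ω _ μ _ ε htail g hg M hM hHess H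
  have hc2 : (2 : ℝ) ≤ c := by exact_mod_cast hc
  have hd0 : (0 : ℝ) < d := by exact_mod_cast hd
  have hlogc : 0 < Real.log c := Real.log_pos (by linarith)
  set r : ℝ := tailConstant C n * 2 ^ (-(b : ℤ)) * √(Real.log c / d)
  have hr : 0 < r := by
    have := tailConstant_pos hC hn
    have := Real.sqrt_pos.2 (div_pos hlogc hd0)
    positivity
  set t : Fin n × Fin c → ℝ := fun p => r * euclNorm (X p.1) * euclNorm (Wᵀ p.2)
  have hentry (p : Fin n × Fin c) : μ {ω | t p < |ε ω p|} ≤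
      ENNReal.ofReal (2 * c ^ (-(1 + Real.logb 2 (200 * n)))) := by
    have hx := euclNorm_pos (hX p.1)
    have hw := euclNorm_pos (hW p.2)
    simpa only [exp_neg_div_eq_rpow_of_threshold (by linarith) hd0 hx.ne' hw.ne' (t := t p) rfl,
      mul_tailConstant_sq hC hn] using htail p.1 p.2 (t p) (by positivity)
  have hgood : ENNReal.ofReal 0.99 ≤ μ {ω | ‖ε ω‖ ≤ r * frobNorm X * frobNorm W} := by
    rw [← sqrt_sum_sq_mul_euclNorm_mul_euclNorm X W hr.le]
    refine le_trans ?_ (ofReal_one_sub_card_mul_le_measure_norm_le μ ε t (by positivity) hentry)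
    have hfail := mul_mul_two_mul_rpow_neg_le (show (1 : ℝ) ≤ n by exact_mod_cast hn) hc2
    gcongr
    simp only [Fintype.card_prod, Fintype.card_fin, Nat.cast_mul]
    linarith
  refine hgood.trans (measure_mono fun ω hω => (abs_sub_le_of_norm_le hg hHess hM H hω).trans_eq ?_)
  rw [zpow_neg_two_mul_natCast]
  linear_combination M / 2 * tailConstant C n ^ 2 * ((2 : ℝ) ^ (-(b : ℤ))) ^ 2 * frobNorm X ^ 2 *
    frobNorm W ^ 2 * Real.sq_sqrt (div_nonneg hlogc.le hd0.le)
end
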